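/- Let S₁ = X⊗Z⊗Z⊗X⊗1, S₂ = 1⊗X⊗Z⊗Z⊗X, S₃ = X⊗1⊗X⊗Z⊗Z, S₄ = Z⊗X⊗1⊗X⊗Z be the five-qubit code stabilizers acting on ℂ²⊗ℂ²⊗ℂ²⊗ℂ²⊗ℂ² (via Kronecker products). Define the ideal observables A₁₀ = H⁽¹⁾, A₁₁ = V⁽¹⁾ where H = (X+Z)/√2 and V = (X−Z)/√2, and Aᵢ₀ = X⁽ⁱ⁾, Aᵢ₁ = Z⁽ⁱ⁾ for i = 2,…,5, where M⁽ⁱ⁾ denotes the Kronecker product with M in slot i and the identity elsewhere. Let B₅ = (A₁₀ + A₁₁)·A₂₁·A₃₁·A₄₀ + A₂₀·A₃₁·A₄₁·A₅₀ + (A₁₀ + A₁₁)·A₃₀·A₄₁·A₅₁ + 2·(A₁₀ − A₁₁)·A₂₀·A₄₀·A₅₁. Then every vector ψ with Sᵢ ψ = ψ for all i ∈ Fin 4 satisfies B₅ ψ = (1 + 4√2) • ψ; in particular every state in the code subspace C₅ attains the maximal quantum value 1 + 4√2 of the Bell expression I₅. -/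

import Mathlib

/-! Since `H + V = √2 X` and `H - V = √2 Z`, every term of `B₅` is a multiple of a stabilizer,
`B₅ = √2 S₁ + S₂ + √2 S₃ + 2√2 S₄`, so `B₅` acts on the code space as `1 + 4√2`. -/

noncomputable section

open Matrix
open scoped Kronecker

namespace FiveQubitCode

/-- The Pauli matrix X. -/
def X : Matrix (Fin 2) (Fin 2) ℂ := !![0, 1; 1, 0]

/-- The Pauli matrix Z. -/
def Z : Matrix (Fin 2) (Fin 2) ℂ := !![1, 0; 0, -1]

/-- `H = (X + Z)/√2`. -/
def Hm : Matrix (Fin 2) (Fin 2) ℂ := (Real.sqrt 2 : ℂ)⁻¹ • (X + Z)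

/-- `V = (X − Z)/√2`. -/
def Vm : Matrix (Fin 2) (Fin 2) ℂ := (Real.sqrt 2 : ℂ)⁻¹ • (X - Z)

/-- The index type of the 32-dimensional five-qubit space `ℂ²⊗ℂ²⊗ℂ²⊗ℂ²⊗ℂ²`. -/
abbrev Q : Type := Fin 2 × Fin 2 × Fin 2 × Fin 2 × Fin 2

/-- The Kronecker (tensor) product of a string of five 2×2 matrices. -/
def emb (g : Fin 5 → Matrix (Fin 2) (Fin 2) ℂ) : Matrix Q Q ℂ :=
  g 0 ⊗ₖ (g 1 ⊗ₖ (g 2 ⊗ₖ (g 3 ⊗ₖ g 4)))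

/-- `M⁽ⁱ⁾`: the 2×2 matrix `M` placed in slot `i` and the identity elsewhere. -/
def slot (M : Matrix (Fin 2) (Fin 2) ℂ) (i : Fin 5) : Matrix Q Q ℂ :=
  emb fun k => if k = i then M else 1

/-- The four stabilizers of the five-qubit code. -/
def S : Fin 4 → Matrix Q Q ℂ :=
  ![emb ![X, Z, Z, X, 1], emb ![1, X, Z, Z, X], emb ![X, 1, X, Z, Z], emb ![Z, X, 1, X, Z]]

/-- The ideal observables: `A₁₀ = H⁽¹⁾`, `A₁₁ = V⁽¹⁾`, and `Aᵢ₀ = X⁽ⁱ⁾`, `Aᵢ₁ = Z⁽ⁱ⁾`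
for the remaining sites (sites are indexed `0,…,4`). -/
def A : Fin 5 → Fin 2 → Matrix Q Q ℂ := fun i x =>
  if i = 0 then (if x = 0 then slot Hm 0 else slot Vm 0)
  else (if x = 0 then slot X i else slot Z i)

/-- The Bell operator `B₅` for the ideal observables. -/
def B : Matrix Q Q ℂ :=
  (A 0 0 + A 0 1) * A 1 1 * A 2 1 * A 3 0 +
    A 1 0 * A 2 1 * A 3 1 * A 4 0 +
    (A 0 0 + A 0 1) * A 2 0 * A 3 1 * A 4 1 +
    2 • ((A 0 0 - A 0 1) * A 1 0 * A 3 0 * A 4 1)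

lemma emb_mul (g h : Fin 5 → Matrix (Fin 2) (Fin 2) ℂ) :
    emb g * emb h = emb (g * h) := by
  simp only [emb, ← mul_kronecker_mul, Pi.mul_apply]

lemma slot_one (i : Fin 5) : slot 1 i = 1 := by
  simp [slot, emb]

lemma slot_add (M N : Matrix (Fin 2) (Fin 2) ℂ) (i : Fin 5) :
    slot (M + N) i = slot M i + slot N i := by
  fin_cases i <;> simp [slot, emb, add_kronecker, kronecker_add]

lemma slot_smul (c : ℂ) (M : Matrix (Fin 2) (Fin 2) ℂ) (i : Fin 5) :
    slot (c • M) i = c • slot M i := by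
  fin_cases i <;> simp [slot, emb, smul_kronecker, kronecker_smul]

lemma slot_sub (M N : Matrix (Fin 2) (Fin 2) ℂ) (i : Fin 5) :
    slot (M - N) i = slot M i - slot N i := by
  rw [sub_eq_add_neg, ← neg_one_smul ℂ N, slot_add, slot_smul, neg_one_smul, ← sub_eq_add_neg]

lemma emb_eq_prod_slot (g : Fin 5 → Matrix (Fin 2) (Fin 2) ℂ) :
    emb g = slot (g 0) 0 * slot (g 1) 1 * slot (g 2) 2 * slot (g 3) 3 * slot (g 4) 4 := by
  simp only [slot, emb_mul]
  congr 1
  funext k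
  fin_cases k <;> simp

lemma inv_sqrt_two_smul_two_smul {M : Type*} [AddCommGroup M] [Module ℂ M] (x : M) :
    (Real.sqrt 2 : ℂ)⁻¹ • (2 : ℂ) • x = (Real.sqrt 2 : ℂ) • x := by
  rw [smul_smul]
  congr 1
  have h : (Real.sqrt 2 : ℂ) ≠ 0 := by simp
  field_simp
  exact_mod_cast (Real.sq_sqrt zero_le_two).symm

lemma Hm_add_Vm : Hm + Vm = (Real.sqrt 2 : ℂ) • X := by
  rw [Hm, Vm, ← smul_add, ← inv_sqrt_two_smul_two_smul]
  congr 1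
  module

lemma Hm_sub_Vm : Hm - Vm = (Real.sqrt 2 : ℂ) • Z := by
  rw [Hm, Vm, ← smul_sub, ← inv_sqrt_two_smul_two_smul]
  congr 1
  module

lemma A_of_ne_zero_zero {i : Fin 5} (hi : i ≠ 0) : A i 0 = slot X i := if_neg hi

lemma A_of_ne_zero_one {i : Fin 5} (hi : i ≠ 0) : A i 1 = slot Z i := if_neg hi

lemma A_zero_add_A_zero_one : A 0 0 + A 0 1 = (Real.sqrt 2 : ℂ) • slot X 0 := by
  rw [show A 0 0 + A 0 1 = slot Hm 0 + slot Vm 0 from rfl, ← slot_add, Hm_add_Vm, slot_smul]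

lemma A_zero_sub_A_zero_one : A 0 0 - A 0 1 = (Real.sqrt 2 : ℂ) • slot Z 0 := by
  rw [show A 0 0 - A 0 1 = slot Hm 0 - slot Vm 0 from rfl, ← slot_sub, Hm_sub_Vm, slot_smul]

lemma B_eq_sum_S : B = (Real.sqrt 2 : ℂ) • S 0 + S 1 + (Real.sqrt 2 : ℂ) • S 2 +
    (2 * Real.sqrt 2 : ℂ) • S 3 := by
  simp only [B, S, A_zero_add_A_zero_one, A_zero_sub_A_zero_one,
    A_of_ne_zero_zero, A_of_ne_zero_one, ne_eq, Fin.reduceEq, not_false_eq_true,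
    emb_eq_prod_slot, Matrix.cons_val, slot_one, mul_one, one_mul, smul_mul_assoc, mul_smul,
    ← Nat.cast_smul_eq_nsmul ℂ, Nat.cast_ofNat]

/-- every vector stabilized by the four five-qubit-code stabilizers is an
eigenvector of the ideal Bell operator `B₅` with eigenvalue `1 + 4√2`. -/
theorem code_states_attain_max_violation (ψ : Q → ℂ) (hψ : ∀ i : Fin 4, S i *ᵥ ψ = ψ) :
    B *ᵥ ψ = ((1 + 4 * Real.sqrt 2 : ℝ) : ℂ) • ψ := by
  rw [B_eq_sum_S]
  simp only [add_mulVec, smul_mulVec, hψ]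
  module

end FiveQubitCode
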